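/- Let p be a strongly 312-avoiding permutation of length n ≥ 2 with p(n) = 1. Then p(n-1) = 2. -/

import Mathlib

/-!
Write `m` for the position of the largest value `n - 1`, `j` for the position of the value `1`,
and `v = p 0`. Since `p² m = p (n - 1) = 0` and `p² (n - 1) = v`, avoidance of `312` by `p²`
sends every position `≤ m` to a value below `v`, so `m < v`. Avoidance of `312` by `p` puts all
values between `1` and `v` at positions `≤ j`, so `v ≤ j + 1`. Hence `m < j`, and if `p` did not
put `1` at position `n - 2`, the positions `m < j < n - 2` would carry a `312` in `p`.
-/

def Avoids312 {n : ℕ} (p : Equiv.Perm (Fin n)) : Prop :=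
  ¬ ∃ a b c : Fin n, a < b ∧ b < c ∧ p b < p c ∧ p c < p a

def StronglyAvoids312 {n : ℕ} (p : Equiv.Perm (Fin n)) : Prop :=
  Avoids312 p ∧ Avoids312 (p * p)

namespace Avoids312

variable {n : ℕ} {σ : Equiv.Perm (Fin n)}

theorem apply_lt_apply (hσ : Avoids312 σ) {a b c : Fin n} (hab : a < b) (hbc : b < c)
    (h : σ b < σ c) : σ a < σ c :=
  lt_of_le_of_ne (not_lt.1 fun hca => hσ ⟨a, b, c, hab, hbc, h, hca⟩)
    (σ.injective.ne (hab.trans hbc).ne)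

theorem val_lt_apply (hσ : Avoids312 σ) {b c : Fin n} (hbc : b < c) (h : σ b < σ c) :
    (b : ℕ) < σ c := by
  have hmaps : (Finset.Iic b).map σ.toEmbedding ⊆ Finset.Iio (σ c) := by
    intro w hw
    obtain ⟨a, ha, rfl⟩ := Finset.mem_map.1 hw
    rcases (Finset.mem_Iic.1 ha).lt_or_eq with hab | rfl
    · exact Finset.mem_Iio.2 (hσ.apply_lt_apply hab hbc h)
    · exact Finset.mem_Iio.2 h
  simpa using Finset.card_le_card hmaps

theorem apply_le_apply_add (hσ : Avoids312 σ) {a b : Fin n} (hab : a ≤ b) :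
    (σ a : ℕ) ≤ σ b + b := by
  have hmaps : (Finset.Icc (σ b) (σ a)).map σ.symm.toEmbedding ⊆ Finset.Iic b := by
    intro c hc
    obtain ⟨w, hw, rfl⟩ := Finset.mem_map.1 hc
    obtain ⟨c, rfl⟩ := σ.surjective w
    obtain ⟨hlo, hhi⟩ := Finset.mem_Icc.1 hw
    simp only [Equiv.coe_toEmbedding, Equiv.symm_apply_apply, Finset.mem_Iic]
    refine not_lt.1 fun hbc => ?_
    have hσb : σ b < σ c := lt_of_le_of_ne hlo (σ.injective.ne hbc.ne)
    rcases hab.lt_or_eq with hab | rfl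
    · exact (hσ.apply_lt_apply hab hbc hσb).not_ge hhi
    · exact hσb.not_ge hhi
  have := Finset.card_le_card hmaps
  simp only [Finset.card_map, Fin.card_Icc, Fin.card_Iic] at this
  omega

end Avoids312

theorem penultimate_is_two {n : ℕ} (hn : 2 ≤ n) (p : Equiv.Perm (Fin n))
    (hp : StronglyAvoids312 p) (hlast : (p ⟨n - 1, by omega⟩ : ℕ) = 0) :
    (p ⟨n - 2, by omega⟩ : ℕ) = 1 := by
  obtain ⟨hp₁, hp₂⟩ := hp
  by_contra hpen
  set first : Fin n := ⟨0, by omega⟩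
  set pen : Fin n := ⟨n - 2, by omega⟩
  set last : Fin n := ⟨n - 1, by omega⟩
  have hfirst_val : (first : ℕ) = 0 := rfl
  have hpen_val : (pen : ℕ) = n - 2 := rfl
  have hlast_val : (last : ℕ) = n - 1 := rfl
  clear_value first pen last
  obtain ⟨m, hpm⟩ := p.surjective last
  obtain ⟨j, hpj⟩ : ∃ j, (p j : ℕ) = 1 := ⟨p.symm ⟨1, by omega⟩, by simp⟩
  have hval_inj (a b : Fin n) : (p a : ℕ) = p b ↔ (a : ℕ) = b := by simp [Fin.val_inj]
  have hpm' : (p m : ℕ) = n - 1 := (congrArg Fin.val hpm).trans hlast_val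
  have hpen_gt : 1 < (p pen : ℕ) := by have := hval_inj pen last; omega
  have hm_lt : (m : ℕ) < p first := by
    have hsq_m : (p * p) m = p last := congrArg p hpm
    have hsq_last : (p * p) last = p first := by
      simp only [Equiv.Perm.mul_apply]; congr 1; exact Fin.ext (hlast.trans hfirst_val.symm)
    have hm_last : m < last := Fin.lt_def.2 (by have := hval_inj m last; have := m.isLt; omega)
    have hsq_lt : (p * p) m < (p * p) last := by
      rw [hsq_m, hsq_last, Fin.lt_def]; have := hval_inj first last; omega
    simpa only [hsq_last] using hp₂.val_lt_apply hm_last hsq_lt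
  have hfirst_le : (p first : ℕ) ≤ 1 + j :=
    hpj ▸ hp₁.apply_le_apply_add (Fin.le_def.2 (hfirst_val ▸ Nat.zero_le _))
  have hm_j : m < j := Fin.lt_def.2 (by have := hval_inj m j; have := (p pen).isLt; omega)
  have hj_pen : j < pen := Fin.lt_def.2 (by
    have := hval_inj j pen; have := hval_inj j last; have := j.isLt; omega)
  have hmax : (p m : ℕ) < p pen := hp₁.apply_lt_apply hm_j hj_pen (Fin.lt_def.2 (by omega))
  have := (p pen).isLt
  omega
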